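/- (Lemma S2, β-remainder for the non-efficient influence function.) Under the setup (with eligibility E := g(L) not depending on A) and Assumptions A4 and A5, let the true nuisance functions be: μ₀(L*,L) a version of E[Y | σ(L*,L)] under μ(·|{A=0,R=1}) with μ₀(L*,L) square-integrable; u(L*,L) a version of E[A | σ(L*,L)] under μ(·|{R=1}) with δ ≤ u ≤ 1−δ a.s.; and ν(L*) a version of E[E·(Y − μ₀(L*,L)) | σ(L*)] under μ(·|{A=1,R=1}). Let η̄₁, ν̄ : ℝ^p → ℝ and μ̄₀, ū : ℝ^p × ℝ^q → ℝ be bounded measurable with η̄₁ ≥ ε' > 0 and δ' ≤ ū ≤ 1−δ' everywhere. Then E[A·(1 − R/η̄₁(L*))·ν̄(L*) + (R·E/η̄₁(L*))·(Y − μ̄₀(L*,L))·{A − (1−A)·(ū/(1−ū))(L*,L)}] − E[A·ν(L*)] = E[A·(1 − η₁(L*)/η̄₁(L*))·(ν̄(L*) − ν(L*))] + E[(R·E/η̄₁(L*))·(μ₀ − μ̄₀)(L*,L)·((u − ū)/(1−ū))(L*,L)]. -/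

import Mathlib

/-!
Both halves of the influence function are compared with the bridge term `E[A R ν(L*) / η̄₁(L*)]`.
For the augmentation half, `A (1 - R/η̄₁) ν̄ - A ν - A (1 - η₁/η̄₁)(ν̄ - ν) + A R ν/η̄₁` equals
`A ((ν - ν̄)/η̄₁)(L*) (R - η(L*, 1))`, which is centred because `η(L*, A)` is a version of
`E[R | L*, A]` and `A η(L*, A) = A η(L*, 1)`. For the outcome half, its difference with the bridge
term and the second remainder is a sum of three regression residuals, `E (Y - μ₀) - ν` on
`{A = 1, R = 1}`, `Y - μ₀` on `{A = 0, R = 1}` and `A - u` on `{R = 1}`, each multiplied by a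
function of the regressors; each is centred under the conditional measure by the pull-out
property, hence so is its restriction to the subpopulation under `μ`. The one delicate
integrability, that of `A ν(L*)`, comes from missingness positivity: `A ν(L*) η(L*, A)` is the
conditional expectation of the integrable `A R ν(L*)`, and `η ≥ ε₀`.
-/

open MeasureTheory ProbabilityTheory
open scoped ProbabilityTheory

section Centered

variable {Ω : Type*} {m₀ : MeasurableSpace Ω} {μ : Measure Ω} {f g : Ω → ℝ}

def IsCentered (μ : Measure Ω) (f : Ω → ℝ) : Prop :=
  Integrable f μ ∧ ∫ ω, f ω ∂μ = 0

theorem IsCentered.add (hf : IsCentered μ f) (hg : IsCentered μ g) :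
    IsCentered μ (fun ω => f ω + g ω) :=
  ⟨hf.1.add hg.1, by rw [integral_add hf.1 hg.1, hf.2, hg.2, add_zero]⟩

theorem IsCentered.sub (hf : IsCentered μ f) (hg : IsCentered μ g) :
    IsCentered μ (fun ω => f ω - g ω) :=
  ⟨hf.1.sub hg.1, by rw [integral_sub hf.1 hg.1, hf.2, hg.2, sub_zero]⟩

theorem IsCentered.congr (hf : IsCentered μ f) (hfg : f =ᵐ[μ] g) : IsCentered μ g :=
  ⟨hf.1.congr hfg, by rw [← integral_congr_ae hfg, hf.2]⟩

theorem IsCentered.integral_eq (h : IsCentered μ (fun ω => f ω - g ω)) (hf : Integrable f μ) :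
    ∫ ω, f ω ∂μ = ∫ ω, g ω ∂μ := by
  have hg : Integrable g μ := (hf.sub h.1).congr (ae_of_all _ fun ω => sub_sub_cancel _ _)
  rw [← sub_eq_zero, ← integral_sub hf hg]
  exact h.2

end Centered

section CondExp

variable {Ω : Type*} {m m₀ : MeasurableSpace Ω} {μ : Measure Ω} {f X h : Ω → ℝ}

theorem integrable_mul_of_ae_eq_condExp (hf : StronglyMeasurable[m] f) (hX : Integrable X μ)
    (hfX : Integrable (fun ω => f ω * X ω) μ) (hh : h =ᵐ[μ] μ[X|m]) :
    Integrable (fun ω => f ω * h ω) μ := by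
  refine integrable_condExp.congr ((condExp_mul_of_stronglyMeasurable_left hf hfX hX).trans ?_)
  filter_upwards [hh] with ω hω
  simp [hω]

theorem integral_mul_eq_of_ae_eq_condExp [IsFiniteMeasure μ] (hm : m ≤ m₀)
    (hf : StronglyMeasurable[m] f) (hX : Integrable X μ)
    (hfX : Integrable (fun ω => f ω * X ω) μ) (hh : h =ᵐ[μ] μ[X|m]) :
    ∫ ω, f ω * X ω ∂μ = ∫ ω, f ω * h ω ∂μ := by
  rw [← integral_condExp hm]
  refine integral_congr_ae ((condExp_mul_of_stronglyMeasurable_left hf hfX hX).trans ?_)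
  filter_upwards [hh] with ω hω
  simp [hω]

theorem isCentered_mul_sub_of_ae_eq_condExp [IsFiniteMeasure μ] (hm : m ≤ m₀)
    (hf : StronglyMeasurable[m] f) (hX : Integrable X μ)
    (hfX : Integrable (fun ω => f ω * X ω) μ) (hh : h =ᵐ[μ] μ[X|m]) :
    IsCentered μ (fun ω => f ω * (X ω - h ω)) := by
  have hfh := integrable_mul_of_ae_eq_condExp hf hX hfX hh
  refine ⟨(hfX.sub hfh).congr (ae_of_all _ fun ω => (mul_sub _ _ _).symm), ?_⟩
  simp_rw [mul_sub]
  rw [integral_sub hfX hfh, integral_mul_eq_of_ae_eq_condExp hm hf hX hfX hh, sub_self]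

theorem integrable_of_integrable_mul_of_condExp_ge (hm : m ≤ m₀) (hf : StronglyMeasurable[m] f)
    (hX : Integrable X μ) (hfX : Integrable (fun ω => f ω * X ω) μ) (hh : h =ᵐ[μ] μ[X|m])
    {c : ℝ} (hc : 0 < c) (hch : ∀ᵐ ω ∂μ, c ≤ h ω) :
    Integrable f μ := by
  refine ((integrable_mul_of_ae_eq_condExp hf hX hfX hh).abs.const_mul c⁻¹).mono'
    (hf.mono hm).aestronglyMeasurable ?_
  filter_upwards [hch] with ω hω
  rw [Real.norm_eq_abs, abs_mul, abs_of_pos (hc.trans_le hω), le_inv_mul_iff₀ hc]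
  exact mul_le_mul_of_nonneg_right hω (abs_nonneg _) |>.trans_eq (mul_comm _ _)

end CondExp

theorem norm_le_one_of_eq_zero_or_eq_one {x : ℝ} (hx : x = 0 ∨ x = 1) : ‖x‖ ≤ 1 := by
  rcases hx with rfl | rfl <;> simp

theorem norm_inv_le_inv_of_le {ε x : ℝ} (hε : 0 < ε) (hx : ε ≤ x) : ‖x⁻¹‖ ≤ ε⁻¹ := by
  rw [norm_inv, Real.norm_of_nonneg (hε.le.trans hx)]
  exact inv_anti₀ hε hx

theorem norm_div_one_sub_le {δ x : ℝ} (hδ : 0 < δ) (hx : δ ≤ x ∧ x ≤ 1 - δ) :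
    ‖x / (1 - x)‖ ≤ δ⁻¹ := by
  have hx1 : ‖x‖ ≤ 1 := by rw [Real.norm_of_nonneg (by linarith)]; linarith
  rw [div_eq_mul_inv]
  exact (norm_mul_le_of_le hx1 (norm_inv_le_inv_of_le hδ (by linarith))).trans_eq (one_mul _)

theorem MeasureTheory.Integrable.div_of_le {Ω : Type*} [MeasurableSpace Ω] {μ : Measure Ω}
    {f b : Ω → ℝ} (hf : Integrable f μ) (hb : Measurable b) {ε : ℝ} (hε : 0 < ε)
    (hbε : ∀ ω, ε ≤ b ω) : Integrable (fun ω => f ω / b ω) μ :=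
  (hf.bdd_mul hb.inv.aestronglyMeasurable
    (ae_of_all _ fun ω => norm_inv_le_inv_of_le hε (hbε ω))).congr
    (ae_of_all _ fun _ => (div_eq_inv_mul _ _).symm)

section Cond

variable {Ω E : Type*} [MeasurableSpace Ω] [NormedAddCommGroup E] {μ : Measure Ω} {s : Set Ω}

theorem restrict_eq_measure_smul_cond (μ : Measure Ω) [IsFiniteMeasure μ] (s : Set Ω) :
    μ.restrict s = μ s • μ[|s] := by
  by_cases hs : μ s = 0
  · simp [hs, Measure.restrict_eq_zero.mpr hs]
  · rw [ProbabilityTheory.cond, smul_smul, ENNReal.mul_inv_cancel hs (measure_ne_top μ s),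
      one_smul]

theorem MeasureTheory.Integrable.cond {f : Ω → E} (hf : Integrable f μ) : Integrable f μ[|s] := by
  by_cases hs : μ s = 0
  · simp [cond_eq_zero_of_meas_eq_zero hs]
  · exact hf.restrict.smul_measure (ENNReal.inv_ne_top.mpr hs)

theorem MeasureTheory.Integrable.indicator_of_cond [IsFiniteMeasure μ] {f : Ω → E}
    (hs : MeasurableSet s) (hf : Integrable f μ[|s]) : Integrable (s.indicator f) μ := by
  rw [integrable_indicator_iff hs, IntegrableOn, restrict_eq_measure_smul_cond]
  exact hf.smul_measure (measure_ne_top μ s)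

theorem IsCentered.indicator_of_cond [IsFiniteMeasure μ] {f : Ω → ℝ} (hs : MeasurableSet s)
    (hf : IsCentered μ[|s] f) : IsCentered μ (s.indicator f) := by
  refine ⟨Integrable.indicator_of_cond hs hf.1, ?_⟩
  rw [integral_indicator hs, restrict_eq_measure_smul_cond, integral_smul_measure, hf.2,
    smul_zero]

end Cond

theorem stronglyMeasurable_mul_comp_comap {Ω α : Type*} [MeasurableSpace α] {Lstar : Ω → α}
    {A : Ω → ℝ} {f : α → ℝ} (hf : Measurable f) :
    StronglyMeasurable[MeasurableSpace.comap (fun ω => (Lstar ω, A ω)) inferInstance]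
      (fun ω => A ω * f (Lstar ω)) :=
  ((measurable_snd.mul (hf.comp measurable_fst)).comp (comap_measurable _)).stronglyMeasurable

section Nuisances

variable {Ω α β : Type*} [MeasurableSpace Ω] [MeasurableSpace α] [MeasurableSpace β]
  {μ : Measure Ω} [IsFiniteMeasure μ] {Lstar : Ω → α} {L : Ω → β} {A R Y : Ω → ℝ}

theorem isCentered_indicator_mul_sub_condExp {γ : Type*} [MeasurableSpace γ] {Z : Ω → γ}
    (hZ : Measurable Z) {S : Set Ω} (hS : MeasurableSet S) {X : Ω → ℝ} (hX : Integrable X μ)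
    {w h : γ → ℝ} (hw : Measurable w) (hwX : Integrable (fun ω => w (Z ω) * X ω) μ)
    (hh : (fun ω => h (Z ω)) =ᵐ[μ[|S]] μ[|S][X|MeasurableSpace.comap Z inferInstance]) :
    IsCentered μ (S.indicator fun ω => w (Z ω) * (X ω - h (Z ω))) :=
  (isCentered_mul_sub_of_ae_eq_condExp hZ.comap_le
    (hw.comp (comap_measurable Z)).stronglyMeasurable hX.cond hwX.cond hh).indicator_of_cond hS

theorem isCentered_missingness_residual (hLstar : Measurable Lstar) (hA : Measurable A)
    (hA01 : ∀ ω, A ω = 0 ∨ A ω = 1) (hR : Measurable R) (hR01 : ∀ ω, R ω = 0 ∨ R ω = 1)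
    {η : α → ℝ → ℝ}
    (hηver : (fun ω => η (Lstar ω) (A ω)) =ᵐ[μ]
      μ[R|MeasurableSpace.comap (fun ω => (Lstar ω, A ω)) inferInstance])
    {f : α → ℝ} (hf : Measurable f) (hAf : Integrable (fun ω => A ω * f (Lstar ω)) μ) :
    IsCentered μ (fun ω => A ω * f (Lstar ω) * (R ω - η (Lstar ω) 1)) := by
  have hR1 : ∀ᵐ ω ∂μ, ‖R ω‖ ≤ 1 := ae_of_all _ fun ω => norm_le_one_of_eq_zero_or_eq_one (hR01 ω)
  refine (isCentered_mul_sub_of_ae_eq_condExp (hLstar.prodMk hA).comap_le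
    (stronglyMeasurable_mul_comp_comap hf)
    (Integrable.of_bound hR.aestronglyMeasurable 1 hR1) (hAf.mul_bdd hR.aestronglyMeasurable hR1)
    hηver).congr (ae_of_all _ fun ω => ?_)
  rcases hA01 ω with h | h <;> simp [h]

theorem integrable_treated_of_integrable_cond (hLstar : Measurable Lstar) (hA : Measurable A)
    (hA01 : ∀ ω, A ω = 0 ∨ A ω = 1) (hR : Measurable R) (hR01 : ∀ ω, R ω = 0 ∨ R ω = 1)
    {η : α → ℝ → ℝ}
    (hηver : (fun ω => η (Lstar ω) (A ω)) =ᵐ[μ]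
      μ[R|MeasurableSpace.comap (fun ω => (Lstar ω, A ω)) inferInstance])
    {ε₀ : ℝ} (hε₀ : 0 < ε₀) (hηpos : ∀ᵐ ω ∂μ, ε₀ ≤ η (Lstar ω) 0 ∧ ε₀ ≤ η (Lstar ω) 1)
    {f : α → ℝ} (hf : Measurable f)
    (hfS : Integrable (fun ω => f (Lstar ω)) μ[|{ω | A ω = 1 ∧ R ω = 1}]) :
    Integrable (fun ω => A ω * f (Lstar ω)) μ := by
  have hS : MeasurableSet {ω | A ω = 1 ∧ R ω = 1} :=
    (hA (measurableSet_singleton 1)).inter (hR (measurableSet_singleton 1))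
  refine integrable_of_integrable_mul_of_condExp_ge (hLstar.prodMk hA).comap_le
    (stronglyMeasurable_mul_comp_comap hf)
    (Integrable.of_bound hR.aestronglyMeasurable 1
      (ae_of_all _ fun ω => norm_le_one_of_eq_zero_or_eq_one (hR01 ω)))
    ((hfS.indicator_of_cond hS).congr (ae_of_all _ fun ω => ?_)) hηver hε₀ ?_
  · rcases hA01 ω with h | h <;> rcases hR01 ω with h' | h' <;> simp [h, h']
  · filter_upwards [hηpos] with ω hω
    rcases hA01 ω with h | h <;> simp [h, hω]

theorem isCentered_nested_residual (hLstar : Measurable Lstar) (hA : Measurable A)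
    (hA01 : ∀ ω, A ω = 0 ∨ A ω = 1) (hR : Measurable R) (hR01 : ∀ ω, R ω = 0 ∨ R ω = 1)
    {X : Ω → ℝ} (hX : Integrable X μ) {ν : α → ℝ}
    (hνver : (fun ω => ν (Lstar ω)) =ᵐ[μ[|{ω | A ω = 1 ∧ R ω = 1}]]
      (μ[|{ω | A ω = 1 ∧ R ω = 1}])[X|MeasurableSpace.comap Lstar inferInstance])
    {w : α → ℝ} (hw : Measurable w) (hwX : Integrable (fun ω => w (Lstar ω) * X ω) μ) :
    IsCentered μ (fun ω => A ω * R ω * w (Lstar ω) * (X ω - ν (Lstar ω))) := by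
  refine (isCentered_indicator_mul_sub_condExp hLstar
    ((hA (measurableSet_singleton 1)).inter (hR (measurableSet_singleton 1))) hX hw hwX
    hνver).congr (ae_of_all _ fun ω => ?_)
  rcases hA01 ω with h | h <;> rcases hR01 ω with h' | h' <;> simp [h, h']

theorem isCentered_outcome_residual (hLstar : Measurable Lstar) (hL : Measurable L)
    (hA : Measurable A) (hA01 : ∀ ω, A ω = 0 ∨ A ω = 1) (hR : Measurable R)
    (hR01 : ∀ ω, R ω = 0 ∨ R ω = 1) (hY : Integrable Y μ) {μ₀ : α → β → ℝ}
    (hμ₀ver : (fun ω => μ₀ (Lstar ω) (L ω)) =ᵐ[μ[|{ω | A ω = 0 ∧ R ω = 1}]]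
      (μ[|{ω | A ω = 0 ∧ R ω = 1}])[Y|MeasurableSpace.comap
          (fun ω => (Lstar ω, L ω)) inferInstance])
    {w : α → β → ℝ} (hw : Measurable (Function.uncurry w))
    (hwY : Integrable (fun ω => w (Lstar ω) (L ω) * Y ω) μ) :
    IsCentered μ (fun ω => (1 - A ω) * R ω * w (Lstar ω) (L ω) * (Y ω - μ₀ (Lstar ω) (L ω))) := by
  refine (isCentered_indicator_mul_sub_condExp (hLstar.prodMk hL) (h := Function.uncurry μ₀)
    ((hA (measurableSet_singleton 0)).inter (hR (measurableSet_singleton 1))) hY hw hwY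
    hμ₀ver).congr (ae_of_all _ fun ω => ?_)
  rcases hA01 ω with h | h <;> rcases hR01 ω with h' | h' <;> simp [h, h']

theorem isCentered_propensity_residual (hLstar : Measurable Lstar) (hL : Measurable L)
    (hA : Measurable A) (hA01 : ∀ ω, A ω = 0 ∨ A ω = 1) (hR : Measurable R)
    (hR01 : ∀ ω, R ω = 0 ∨ R ω = 1) {u : α → β → ℝ}
    (huver : (fun ω => u (Lstar ω) (L ω)) =ᵐ[μ[|{ω | R ω = 1}]]
      (μ[|{ω | R ω = 1}])[A|MeasurableSpace.comap
          (fun ω => (Lstar ω, L ω)) inferInstance])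
    {w : α → β → ℝ} (hw : Measurable (Function.uncurry w))
    (hwint : Integrable (fun ω => w (Lstar ω) (L ω)) μ) :
    IsCentered μ (fun ω => R ω * w (Lstar ω) (L ω) * (A ω - u (Lstar ω) (L ω))) := by
  have hA1 : ∀ᵐ ω ∂μ, ‖A ω‖ ≤ 1 := ae_of_all _ fun ω => norm_le_one_of_eq_zero_or_eq_one (hA01 ω)
  refine (isCentered_indicator_mul_sub_condExp (hLstar.prodMk hL) (h := Function.uncurry u)
    (hR (measurableSet_singleton 1)) (Integrable.of_bound hA.aestronglyMeasurable 1 hA1) hw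
    (hwint.mul_bdd hA.aestronglyMeasurable hA1) huver).congr (ae_of_all _ fun ω => ?_)
  rcases hR01 ω with h | h <;> simp [h]

theorem integrable_augmentation_term (hLstar : Measurable Lstar) (hA : Measurable A)
    (hA01 : ∀ ω, A ω = 0 ∨ A ω = 1) (hR : Measurable R) (hR01 : ∀ ω, R ω = 0 ∨ R ω = 1)
    {ηb νb : α → ℝ} (hηb : Measurable ηb) (hνb : Measurable νb) {C : ℝ} (hνbC : ∀ x, |νb x| ≤ C)
    {ε : ℝ} (hε : 0 < ε) (hηbε : ∀ x, ε ≤ ηb x) :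
    Integrable (fun ω => A ω * (1 - R ω / ηb (Lstar ω)) * νb (Lstar ω)) μ := by
  refine Integrable.of_bound (by fun_prop) (1 * (1 + 1 * ε⁻¹) * C) (ae_of_all _ fun ω => ?_)
  rw [div_eq_mul_inv]
  exact norm_mul_le_of_le (norm_mul_le_of_le (norm_le_one_of_eq_zero_or_eq_one (hA01 ω))
    (norm_sub_le_of_le norm_one.le (norm_mul_le_of_le (norm_le_one_of_eq_zero_or_eq_one (hR01 ω))
      (norm_inv_le_inv_of_le hε (hηbε _))))) (hνbC _)

theorem integrable_outcome_term (hLstar : Measurable Lstar) (hL : Measurable L)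
    (hA : Measurable A) (hA01 : ∀ ω, A ω = 0 ∨ A ω = 1) (hR : Measurable R)
    (hR01 : ∀ ω, R ω = 0 ∨ R ω = 1) (hY : Integrable Y μ) {g : β → ℝ} (hg : Measurable g)
    (hg01 : ∀ y, g y = 0 ∨ g y = 1) {ηb : α → ℝ} (hηb : Measurable ηb) {ε : ℝ} (hε : 0 < ε)
    (hηbε : ∀ x, ε ≤ ηb x) {μb ub : α → β → ℝ} (hμb : Measurable (Function.uncurry μb))
    {C : ℝ} (hμbC : ∀ x y, |μb x y| ≤ C) (hub : Measurable (Function.uncurry ub)) {δ : ℝ}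
    (hδ : 0 < δ) (hubδ : ∀ x y, δ ≤ ub x y ∧ ub x y ≤ 1 - δ) :
    Integrable (fun ω => (R ω * g (L ω) / ηb (Lstar ω)) * (Y ω - μb (Lstar ω) (L ω))
          * (A ω - (1 - A ω) * (ub (Lstar ω) (L ω) / (1 - ub (Lstar ω) (L ω))))) μ := by
  have hA1 : ∀ ω, ‖A ω‖ ≤ 1 := fun ω => norm_le_one_of_eq_zero_or_eq_one (hA01 ω)
  have hμbL : Measurable fun ω => μb (Lstar ω) (L ω) := hμb.comp (hLstar.prodMk hL)
  have hubL : Measurable fun ω => ub (Lstar ω) (L ω) := hub.comp (hLstar.prodMk hL)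
  have hweight : ∀ ω, ‖R ω * g (L ω) * (ηb (Lstar ω))⁻¹
      * (A ω - (1 - A ω) * (ub (Lstar ω) (L ω) / (1 - ub (Lstar ω) (L ω))))‖
        ≤ 1 * 1 * ε⁻¹ * (1 + (1 + 1) * δ⁻¹) := fun ω =>
    norm_mul_le_of_le (norm_mul_le_of_le (norm_mul_le_of_le
      (norm_le_one_of_eq_zero_or_eq_one (hR01 ω)) (norm_le_one_of_eq_zero_or_eq_one (hg01 _)))
      (norm_inv_le_inv_of_le hε (hηbε _))) (norm_sub_le_of_le (hA1 ω) (norm_mul_le_of_le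
        (norm_sub_le_of_le norm_one.le (hA1 ω)) (norm_div_one_sub_le hδ (hubδ _ _))))
  refine ((hY.sub (Integrable.of_bound hμbL.aestronglyMeasurable C
    (ae_of_all _ fun ω => hμbC _ _))).bdd_mul (by fun_prop) (ae_of_all _ hweight)).congr
    (ae_of_all _ fun ω => ?_)
  simp only [Pi.sub_apply]
  ring

theorem integral_augmentation_term_sub (hLstar : Measurable Lstar) (hA : Measurable A)
    (hA01 : ∀ ω, A ω = 0 ∨ A ω = 1) (hR : Measurable R) (hR01 : ∀ ω, R ω = 0 ∨ R ω = 1)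
    {η : α → ℝ → ℝ}
    (hηver : (fun ω => η (Lstar ω) (A ω)) =ᵐ[μ]
      μ[R|MeasurableSpace.comap (fun ω => (Lstar ω, A ω)) inferInstance])
    {ν : α → ℝ} (hν : Measurable ν) (hAν : Integrable (fun ω => A ω * ν (Lstar ω)) μ)
    {ηb νb : α → ℝ} (hηb : Measurable ηb) (hνb : Measurable νb) {C : ℝ} (hνbC : ∀ x, |νb x| ≤ C)
    {ε : ℝ} (hε : 0 < ε) (hηbε : ∀ x, ε ≤ ηb x) :
    ∫ ω, A ω * (1 - R ω / ηb (Lstar ω)) * νb (Lstar ω) ∂μ - ∫ ω, A ω * ν (Lstar ω) ∂μ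
      = ∫ ω, A ω * (1 - η (Lstar ω) 1 / ηb (Lstar ω)) * (νb (Lstar ω) - ν (Lstar ω)) ∂μ
        - ∫ ω, A ω * R ω * ν (Lstar ω) / ηb (Lstar ω) ∂μ := by
  have hR1 : ∀ᵐ ω ∂μ, ‖R ω‖ ≤ 1 :=
    ae_of_all _ fun ω => norm_le_one_of_eq_zero_or_eq_one (hR01 ω)
  have hAνb : Integrable (fun ω => A ω * νb (Lstar ω)) μ :=
    Integrable.of_bound (μ := μ) (by fun_prop) (1 * C) (ae_of_all _ fun ω =>
      norm_mul_le_of_le (norm_le_one_of_eq_zero_or_eq_one (hA01 ω)) (hνbC _))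
  have hAf : Integrable (fun ω => A ω * ((ν (Lstar ω) - νb (Lstar ω)) / ηb (Lstar ω))) μ :=
    ((hAν.sub hAνb).div_of_le (hηb.comp hLstar) hε fun _ => hηbε _).congr
      (ae_of_all _ fun ω => by simp only [Pi.sub_apply, Function.comp_apply]; ring)
  have hM := isCentered_missingness_residual hLstar hA hA01 hR hR01 hηver
    (f := fun x => (ν x - νb x) / ηb x) (by fun_prop) hAf
  have hAνR : Integrable (fun ω => A ω * R ω * ν (Lstar ω) / ηb (Lstar ω)) μ :=
    ((hAν.div_of_le (hηb.comp hLstar) hε fun _ => hηbε _).mul_bdd hR.aestronglyMeasurable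
      hR1).congr (ae_of_all _ fun ω => by simp only [Function.comp_apply]; ring)
  have hT₁ := integrable_augmentation_term (μ := μ) hLstar hA hA01 hR hR01 hηb hνb hνbC hε hηbε
  rw [sub_eq_sub_iff_add_eq_add, ← integral_add hT₁ hAνR, ← integral_add ?_ hAν]
  · refine IsCentered.integral_eq (hM.congr (ae_of_all _ fun ω => ?_)) (hT₁.add hAνR)
    have := (hε.trans_le (hηbε (Lstar ω))).ne'
    field_simp
    ring
  · refine (((hAνb.sub hAν).add (hAf.mul_bdd hR.aestronglyMeasurable hR1)).sub hM.1).congr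
      (ae_of_all _ fun ω => ?_)
    simp only [Pi.add_apply, Pi.sub_apply]
    field_simp
    ring

theorem integral_outcome_term_eq (hLstar : Measurable Lstar) (hL : Measurable L)
    (hA : Measurable A) (hA01 : ∀ ω, A ω = 0 ∨ A ω = 1) (hR : Measurable R)
    (hR01 : ∀ ω, R ω = 0 ∨ R ω = 1) (hY : Integrable Y μ) {g : β → ℝ} (hg : Measurable g)
    (hg01 : ∀ y, g y = 0 ∨ g y = 1) {μ₀ : α → β → ℝ} (hμ₀ : Measurable (Function.uncurry μ₀))
    (hμ₀int : Integrable (fun ω => μ₀ (Lstar ω) (L ω)) μ)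
    (hμ₀ver : (fun ω => μ₀ (Lstar ω) (L ω)) =ᵐ[μ[|{ω | A ω = 0 ∧ R ω = 1}]]
      (μ[|{ω | A ω = 0 ∧ R ω = 1}])[Y|MeasurableSpace.comap
          (fun ω => (Lstar ω, L ω)) inferInstance])
    {u : α → β → ℝ}
    (huver : (fun ω => u (Lstar ω) (L ω)) =ᵐ[μ[|{ω | R ω = 1}]]
      (μ[|{ω | R ω = 1}])[A|MeasurableSpace.comap (fun ω => (Lstar ω, L ω)) inferInstance])
    {ν : α → ℝ} (hAν : Integrable (fun ω => A ω * ν (Lstar ω)) μ)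
    (hνver : (fun ω => ν (Lstar ω)) =ᵐ[μ[|{ω | A ω = 1 ∧ R ω = 1}]]
      (μ[|{ω | A ω = 1 ∧ R ω = 1}])[(fun ω => g (L ω) * (Y ω - μ₀ (Lstar ω) (L ω)))|
        MeasurableSpace.comap Lstar inferInstance])
    {ηb : α → ℝ} (hηb : Measurable ηb) {ε : ℝ} (hε : 0 < ε) (hηbε : ∀ x, ε ≤ ηb x)
    {μb ub : α → β → ℝ} (hμb : Measurable (Function.uncurry μb)) {C : ℝ}
    (hμbC : ∀ x y, |μb x y| ≤ C) (hub : Measurable (Function.uncurry ub)) {δ : ℝ} (hδ : 0 < δ)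
    (hubδ : ∀ x y, δ ≤ ub x y ∧ ub x y ≤ 1 - δ) :
    ∫ ω, (R ω * g (L ω) / ηb (Lstar ω)) * (Y ω - μb (Lstar ω) (L ω))
          * (A ω - (1 - A ω) * (ub (Lstar ω) (L ω) / (1 - ub (Lstar ω) (L ω)))) ∂μ
      = ∫ ω, A ω * R ω * ν (Lstar ω) / ηb (Lstar ω) ∂μ
        + ∫ ω, (R ω * g (L ω) / ηb (Lstar ω)) * (μ₀ (Lstar ω) (L ω) - μb (Lstar ω) (L ω))
          * ((u (Lstar ω) (L ω) - ub (Lstar ω) (L ω)) / (1 - ub (Lstar ω) (L ω))) ∂μ := by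
  have hg1 : ∀ y, ‖g y‖ ≤ 1 := fun y => norm_le_one_of_eq_zero_or_eq_one (hg01 y)
  have hι : ∀ x, ‖(ηb x)⁻¹‖ ≤ ε⁻¹ := fun x => norm_inv_le_inv_of_le hε (hηbε x)
  have hR1 : ∀ᵐ ω ∂μ, ‖R ω‖ ≤ 1 :=
    ae_of_all _ fun ω => norm_le_one_of_eq_zero_or_eq_one (hR01 ω)
  have hX : Integrable (fun ω => g (L ω) * (Y ω - μ₀ (Lstar ω) (L ω))) μ :=
    (hY.sub hμ₀int).bdd_mul (hg.comp hL).aestronglyMeasurable (ae_of_all _ fun ω => hg1 _)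
  have hN := isCentered_nested_residual hLstar hA hA01 hR hR01 hX hνver
    (w := fun x => (ηb x)⁻¹) (by fun_prop)
    (hX.bdd_mul (hηb.comp hLstar).inv.aestronglyMeasurable (ae_of_all _ fun ω => hι _))
  have hO := isCentered_outcome_residual hLstar hL hA hA01 hR hR01 hY hμ₀ver
    (w := fun x y => g y * (ub x y / (1 - ub x y)) * (ηb x)⁻¹)
    (((hg.comp measurable_snd).mul (hub.div (measurable_const (a := (1 : ℝ)) |>.sub hub))).mul
      (hηb.comp measurable_fst).inv)
    (hY.bdd_mul (by fun_prop) (ae_of_all _ fun ω => norm_mul_le_of_le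
      (norm_mul_le_of_le (hg1 _) (norm_div_one_sub_le hδ (hubδ _ _))) (hι _)))
  have hμbint : Integrable (fun ω => μb (Lstar ω) (L ω)) μ :=
    Integrable.of_bound (hμb.comp (hLstar.prodMk hL)).aestronglyMeasurable C
      (ae_of_all _ fun ω => hμbC _ _)
  have hP := isCentered_propensity_residual hLstar hL hA hA01 hR hR01 huver
    (w := fun x y => g y * (ηb x)⁻¹ * (1 - ub x y)⁻¹ * (μ₀ x y - μb x y))
    ((((hg.comp measurable_snd).mul (hηb.comp measurable_fst).inv).mul
      (measurable_const (a := (1 : ℝ)) |>.sub hub).inv).mul (hμ₀.sub hμb))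
    ((hμ₀int.sub hμbint).bdd_mul (by fun_prop) (ae_of_all _ fun ω => norm_mul_le_of_le
      (norm_mul_le_of_le (hg1 _) (hι _))
      (norm_inv_le_inv_of_le hδ (by linarith [hubδ (Lstar ω) (L ω)]))))
  have hAνR : Integrable (fun ω => A ω * R ω * ν (Lstar ω) / ηb (Lstar ω)) μ :=
    ((hAν.div_of_le (hηb.comp hLstar) hε fun _ => hηbε _).mul_bdd hR.aestronglyMeasurable
      hR1).congr (ae_of_all _ fun ω => by simp only [Function.comp_apply]; ring)
  have hT₂ := integrable_outcome_term hLstar hL hA hA01 hR hR01 hY hg hg01 hηb hε hηbε hμb hμbC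
    hub hδ hubδ
  rw [← sub_eq_iff_eq_add', ← integral_sub hT₂ hAνR]
  refine IsCentered.integral_eq (((hN.sub hO).add hP).congr (ae_of_all _ fun ω => ?_))
    (hT₂.sub hAνR)
  have := (hε.trans_le (hηbε (Lstar ω))).ne'
  have : 1 - ub (Lstar ω) (L ω) ≠ 0 := by linarith [hubδ (Lstar ω) (L ω)]
  field_simp
  ring

end Nuisances

theorem stmt_11_general
    {Ω : Type*} [𝓕 : MeasurableSpace Ω]
    (μ : Measure Ω) [IsProbabilityMeasure μ]
    {p q : ℕ}
    (Lstar : Ω → Fin p → ℝ) (L : Ω → Fin q → ℝ) (A R Y : Ω → ℝ)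
    (hLstar : Measurable Lstar) (hL : Measurable L)
    (hA : Measurable A) (hR : Measurable R)
    (hA01 : ∀ ω, A ω = 0 ∨ A ω = 1) (hR01 : ∀ ω, R ω = 0 ∨ R ω = 1)
    (hY2 : MemLp Y 2 μ)
    -- eligibility does not depend on treatment: E = g(L)
    (g : (Fin q → ℝ) → ℝ) (hg : Measurable g)
    (hg01 : ∀ x, g x = 0 ∨ g x = 1)
    -- Assumption A5 (missingness positivity)
    (η : (Fin p → ℝ) → ℝ → ℝ)
    (hηver : (fun ω => η (Lstar ω) (A ω)) =ᵐ[μ]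
      μ[R|MeasurableSpace.comap (fun ω => (Lstar ω, A ω)) inferInstance])
    (ε₀ : ℝ) (hε₀ : 0 < ε₀)
    (hηpos : ∀ᵐ ω ∂μ, ε₀ ≤ η (Lstar ω) 0 ∧ ε₀ ≤ η (Lstar ω) 1)
    -- true outcome regression among untreated complete cases
    (μ₀ : (Fin p → ℝ) → (Fin q → ℝ) → ℝ) (hμ₀ : Measurable (Function.uncurry μ₀))
    (hμ₀ver : (fun ω => μ₀ (Lstar ω) (L ω)) =ᵐ[μ[|{ω | A ω = 0 ∧ R ω = 1}]]
      (μ[|{ω | A ω = 0 ∧ R ω = 1}])[Y|MeasurableSpace.comap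
          (fun ω => (Lstar ω, L ω)) inferInstance])
    (hμ₀2 : MemLp (fun ω => μ₀ (Lstar ω) (L ω)) 2 μ)
    -- true complete-case treatment propensity
    (u : (Fin p → ℝ) → (Fin q → ℝ) → ℝ)
    (huver : (fun ω => u (Lstar ω) (L ω)) =ᵐ[μ[|{ω | R ω = 1}]]
      (μ[|{ω | R ω = 1}])[A|MeasurableSpace.comap
          (fun ω => (Lstar ω, L ω)) inferInstance])
    -- true nested nuisance ν among treated complete cases
    (ν : (Fin p → ℝ) → ℝ) (hν : Measurable ν)
    (hνver : (fun ω => ν (Lstar ω)) =ᵐ[μ[|{ω | A ω = 1 ∧ R ω = 1}]]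
      (μ[|{ω | A ω = 1 ∧ R ω = 1}])[(fun ω => g (L ω) * (Y ω - μ₀ (Lstar ω) (L ω)))|
        MeasurableSpace.comap Lstar inferInstance])
    -- estimated (barred) nuisances: bounded measurable
    (ηbar₁ νbar : (Fin p → ℝ) → ℝ) (hηbar₁ : Measurable ηbar₁) (hνbar : Measurable νbar)
    (hνbarbd : ∃ C, ∀ x, |νbar x| ≤ C)
    (ε' : ℝ) (hε' : 0 < ε') (hηbar₁lb : ∀ x, ε' ≤ ηbar₁ x)
    (μbar₀ ubar : (Fin p → ℝ) → (Fin q → ℝ) → ℝ)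
    (hμbar₀ : Measurable (Function.uncurry μbar₀)) (hubar : Measurable (Function.uncurry ubar))
    (hμbar₀bd : ∃ C, ∀ x y, |μbar₀ x y| ≤ C)
    (δ' : ℝ) (hδ' : 0 < δ')
    (hubarbd : ∀ x y, δ' ≤ ubar x y ∧ ubar x y ≤ 1 - δ') :
    (∫ ω, A ω * (1 - R ω / ηbar₁ (Lstar ω)) * νbar (Lstar ω)
        + (R ω * g (L ω) / ηbar₁ (Lstar ω)) * (Y ω - μbar₀ (Lstar ω) (L ω))
          * (A ω - (1 - A ω) * (ubar (Lstar ω) (L ω) / (1 - ubar (Lstar ω) (L ω)))) ∂μ)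
      - ∫ ω, A ω * ν (Lstar ω) ∂μ
    = ∫ ω, A ω * (1 - η (Lstar ω) 1 / ηbar₁ (Lstar ω)) * (νbar (Lstar ω) - ν (Lstar ω)) ∂μ
      + ∫ ω, (R ω * g (L ω) / ηbar₁ (Lstar ω))
          * (μ₀ (Lstar ω) (L ω) - μbar₀ (Lstar ω) (L ω))
          * ((u (Lstar ω) (L ω) - ubar (Lstar ω) (L ω)) / (1 - ubar (Lstar ω) (L ω))) ∂μ := by
  have hY : Integrable Y μ := hY2.integrable one_le_two
  obtain ⟨Cν, hCν⟩ := hνbarbd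
  obtain ⟨Cμ, hCμ⟩ := hμbar₀bd
  have hAν : Integrable (fun ω => A ω * ν (Lstar ω)) μ :=
    integrable_treated_of_integrable_cond hLstar hA hA01 hR hR01 hηver hε₀ hηpos hν
      (integrable_condExp.congr hνver.symm)
  rw [integral_add
      (integrable_augmentation_term hLstar hA hA01 hR hR01 hηbar₁ hνbar hCν hε' hηbar₁lb)
      (integrable_outcome_term hLstar hL hA hA01 hR hR01 hY hg hg01 hηbar₁ hε' hηbar₁lb hμbar₀
        hCμ hubar hδ' hubarbd),
    add_sub_right_comm, integral_augmentation_term_sub hLstar hA hA01 hR hR01 hηver hν hAν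
      hηbar₁ hνbar hCν hε' hηbar₁lb,
    integral_outcome_term_eq hLstar hL hA hA01 hR hR01 hY hg hg01 hμ₀
      (hμ₀2.integrable one_le_two) hμ₀ver huver hAν hνver hηbar₁ hε' hηbar₁lb hμbar₀ hCμ hubar
      hδ' hubarbd]
  ring

/-- **Lemma S2 (β-remainder for the non-efficient influence function).** -/
theorem stmt_11
    {Ω : Type*} [𝓕 : MeasurableSpace Ω] [StandardBorelSpace Ω] [Nonempty Ω]
    (μ : Measure Ω) [IsProbabilityMeasure μ]
    {p q : ℕ}
    (Lstar : Ω → Fin p → ℝ) (L : Ω → Fin q → ℝ) (A R Y : Ω → ℝ)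
    (hLstar : Measurable Lstar) (hL : Measurable L)
    (hA : Measurable A) (hR : Measurable R) (hY : Measurable Y)
    (hA01 : ∀ ω, A ω = 0 ∨ A ω = 1) (hR01 : ∀ ω, R ω = 0 ∨ R ω = 1)
    (hY2 : MemLp Y 2 μ)
    -- eligibility does not depend on treatment: E = g(L)
    (g : (Fin q → ℝ) → ℝ) (hg : Measurable g)
    (hg01 : ∀ x, g x = 0 ∨ g x = 1)
    -- Assumption A4 (MAR): R ⫫ (L, Y) | σ(L*, A)
    (hMAR : CondIndepFun (MeasurableSpace.comap (fun ω => (Lstar ω, A ω)) inferInstance)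
      ((hLstar.prodMk hA).comap_le) R (fun ω => (L ω, Y ω)) μ)
    -- Assumption A5 (missingness positivity)
    (η : (Fin p → ℝ) → ℝ → ℝ) (hη : Measurable (Function.uncurry η))
    (hηver : (fun ω => η (Lstar ω) (A ω)) =ᵐ[μ]
      μ[R|MeasurableSpace.comap (fun ω => (Lstar ω, A ω)) inferInstance])
    (ε₀ : ℝ) (hε₀ : 0 < ε₀)
    (hηpos : ∀ᵐ ω ∂μ, ε₀ ≤ η (Lstar ω) 0 ∧ ε₀ ≤ η (Lstar ω) 1)
    -- positivity of relevant events
    (hA1R : 0 < μ {ω | A ω = 1 ∧ R ω = 1})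
    (hA0R : 0 < μ {ω | A ω = 0 ∧ R ω = 1})
    (hRpos : 0 < μ {ω | R ω = 1})
    -- true outcome regression among untreated complete cases
    (μ₀ : (Fin p → ℝ) → (Fin q → ℝ) → ℝ) (hμ₀ : Measurable (Function.uncurry μ₀))
    (hμ₀ver : (fun ω => μ₀ (Lstar ω) (L ω)) =ᵐ[μ[|{ω | A ω = 0 ∧ R ω = 1}]]
      (μ[|{ω | A ω = 0 ∧ R ω = 1}])[Y|MeasurableSpace.comap
          (fun ω => (Lstar ω, L ω)) inferInstance])
    (hμ₀2 : MemLp (fun ω => μ₀ (Lstar ω) (L ω)) 2 μ)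
    -- true complete-case treatment propensity
    (u : (Fin p → ℝ) → (Fin q → ℝ) → ℝ) (hu : Measurable (Function.uncurry u))
    (huver : (fun ω => u (Lstar ω) (L ω)) =ᵐ[μ[|{ω | R ω = 1}]]
      (μ[|{ω | R ω = 1}])[A|MeasurableSpace.comap
          (fun ω => (Lstar ω, L ω)) inferInstance])
    (δ : ℝ) (hδ : 0 < δ)
    (hubd : ∀ᵐ ω ∂(μ[|{ω | R ω = 1}]),
      δ ≤ u (Lstar ω) (L ω) ∧ u (Lstar ω) (L ω) ≤ 1 - δ)
    -- true nested nuisance ν among treated complete cases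
    (ν : (Fin p → ℝ) → ℝ) (hν : Measurable ν)
    (hνver : (fun ω => ν (Lstar ω)) =ᵐ[μ[|{ω | A ω = 1 ∧ R ω = 1}]]
      (μ[|{ω | A ω = 1 ∧ R ω = 1}])[(fun ω => g (L ω) * (Y ω - μ₀ (Lstar ω) (L ω)))|
        MeasurableSpace.comap Lstar inferInstance])
    -- estimated (barred) nuisances: bounded measurable
    (ηbar₁ νbar : (Fin p → ℝ) → ℝ) (hηbar₁ : Measurable ηbar₁) (hνbar : Measurable νbar)
    (hηbar₁bd : ∃ C, ∀ x, |ηbar₁ x| ≤ C) (hνbarbd : ∃ C, ∀ x, |νbar x| ≤ C)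
    (ε' : ℝ) (hε' : 0 < ε') (hηbar₁lb : ∀ x, ε' ≤ ηbar₁ x)
    (μbar₀ ubar : (Fin p → ℝ) → (Fin q → ℝ) → ℝ)
    (hμbar₀ : Measurable (Function.uncurry μbar₀)) (hubar : Measurable (Function.uncurry ubar))
    (hμbar₀bd : ∃ C, ∀ x y, |μbar₀ x y| ≤ C)
    (δ' : ℝ) (hδ' : 0 < δ')
    (hubarbd : ∀ x y, δ' ≤ ubar x y ∧ ubar x y ≤ 1 - δ') :
    (∫ ω, A ω * (1 - R ω / ηbar₁ (Lstar ω)) * νbar (Lstar ω)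
        + (R ω * g (L ω) / ηbar₁ (Lstar ω)) * (Y ω - μbar₀ (Lstar ω) (L ω))
          * (A ω - (1 - A ω) * (ubar (Lstar ω) (L ω) / (1 - ubar (Lstar ω) (L ω)))) ∂μ)
      - ∫ ω, A ω * ν (Lstar ω) ∂μ
    = ∫ ω, A ω * (1 - η (Lstar ω) 1 / ηbar₁ (Lstar ω)) * (νbar (Lstar ω) - ν (Lstar ω)) ∂μ
      + ∫ ω, (R ω * g (L ω) / ηbar₁ (Lstar ω))
          * (μ₀ (Lstar ω) (L ω) - μbar₀ (Lstar ω) (L ω))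
          * ((u (Lstar ω) (L ω) - ubar (Lstar ω) (L ω)) / (1 - ubar (Lstar ω) (L ω))) ∂μ :=
  stmt_11_general (𝓕 := 𝓕) μ Lstar L A R Y hLstar hL hA hR hA01 hR01 hY2 g hg hg01 η hηver ε₀ hε₀
    hηpos μ₀ hμ₀ hμ₀ver hμ₀2 u huver ν hν hνver ηbar₁ νbar hηbar₁ hνbar hνbarbd ε' hε' hηbar₁lb
    μbar₀ ubar hμbar₀ hubar hμbar₀bd δ' hδ' hubarbd
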